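/- Let L be Hermitian on ℂᴰ with eigenvalues λⱼ and minimum nonzero spectral gap γ > 0 among distinct eigenvalues, let ρ₀ = |ψ⟩⟨ψ| be a pure state with c_{jk} = cⱼc̄ₖ, Σⱼ|cⱼ|² = 1, and let P be an orthogonal projector. Define R_t = (i/t)Σ_{λⱼ≠λₖ} c_{jk}(e^{-i(λⱼ−λₖ)t}−1)/(λⱼ−λₖ)|λⱼ⟩⟨λₖ|. Then |Tr(R_t P)| ≤ (2/(γt))·√(Σⱼ(⟨λⱼ|P|λⱼ⟩ − ⟨λⱼ|P|λⱼ⟩²)). -/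

import Mathlib

/-
Only the pairs with `λⱼ ≠ λₖ` contribute to `Tr(P R_t)`, and since `|e^{-iθ} - 1| ≤ 2` and
`|λⱼ - λₖ| ≥ γ` each entry of `R_t` has modulus at most `2|cⱼ||cₖ|/(γt)`. Cauchy–Schwarz over
the off-diagonal pairs bounds `|Tr(P R_t)|` by `2/(γt) · Σⱼ|cⱼ|² · (Σ_{j≠k} |Pⱼₖ|²)^{1/2}`, and
`P = P† = P²` turns each row sum `Σₖ |Pⱼₖ|²` into `Pⱼⱼ`, so the off-diagonal mass of `P` is
`Σⱼ (Pⱼⱼ - Pⱼⱼ²)`.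
-/

namespace Finset

variable {ι : Type*} [Fintype ι]

lemma sum_offDiag_eq_sum_sub_sum_diag [DecidableEq ι] {M : Type*} [AddCommGroup M]
    (f : ι × ι → M) :
    ∑ p ∈ univ.offDiag, f p = ∑ j, ∑ k, f (j, k) - ∑ j, f (j, j) := by
  rw [eq_sub_iff_add_eq, ← sum_diag, add_comm, ← sum_union (disjoint_diag_offDiag _),
    diag_union_offDiag, sum_product]

lemma sum_offDiag_sq_mul_sq_le [DecidableEq ι] (a : ι → ℝ) :
    ∑ p ∈ univ.offDiag, (a p.1 * a p.2) ^ 2 ≤ (∑ j, a j ^ 2) ^ 2 := by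
  calc ∑ p ∈ univ.offDiag, (a p.1 * a p.2) ^ 2
      ≤ ∑ p : ι × ι, (a p.1 * a p.2) ^ 2 := sum_le_univ_sum_of_nonneg fun _ => sq_nonneg _
    _ = (∑ j, a j ^ 2) ^ 2 := by
      simp only [Fintype.sum_prod_type, mul_pow, sq (∑ j, a j ^ 2), sum_mul_sum]

end Finset

open Finset

namespace Matrix

variable {ι : Type*}

lemma norm_trace_mul_le_of_norm_apply_le [Fintype ι] [DecidableEq ι] (P R : Matrix ι ι ℂ) {C : ℝ}
    (hC : 0 ≤ C) (a : ι → ℝ) (hdiag : ∀ j, R j j = 0) (hR : ∀ j k, ‖R j k‖ ≤ C * (a j * a k)) :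
    ‖trace (P * R)‖ ≤ C * (∑ j, a j ^ 2) * √(∑ p ∈ univ.offDiag, ‖P p.1 p.2‖ ^ 2) := by
  have htrace : trace (P * R) = ∑ p ∈ univ.offDiag, P p.1 p.2 * R p.2 p.1 := by
    simp [sum_offDiag_eq_sum_sub_sum_diag, trace, mul_apply, hdiag]
  have hsqrt : √(∑ p ∈ univ.offDiag, (a p.1 * a p.2) ^ 2) ≤ ∑ j, a j ^ 2 :=
    (Real.sqrt_le_left (by positivity)).mpr (sum_offDiag_sq_mul_sq_le a)
  calc ‖trace (P * R)‖
      ≤ ∑ p ∈ univ.offDiag, C * (a p.1 * a p.2 * ‖P p.1 p.2‖) := by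
        rw [htrace]
        refine norm_sum_le_of_le _ fun p _ => ?_
        rw [norm_mul, mul_comm, mul_comm (a p.1), ← mul_assoc]
        gcongr
        exact hR _ _
    _ = C * ∑ p ∈ univ.offDiag, a p.1 * a p.2 * ‖P p.1 p.2‖ := (mul_sum ..).symm
    _ ≤ C * (√(∑ p ∈ univ.offDiag, (a p.1 * a p.2) ^ 2) *
          √(∑ p ∈ univ.offDiag, ‖P p.1 p.2‖ ^ 2)) := by
        gcongr
        exact Real.sum_mul_le_sqrt_mul_sqrt ..
    _ ≤ C * (∑ j, a j ^ 2) * √(∑ p ∈ univ.offDiag, ‖P p.1 p.2‖ ^ 2) := by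
        rw [← mul_assoc]
        gcongr

lemma IsHermitian.sum_norm_sq_row_eq_re_diag_of_idempotent [Fintype ι] {P : Matrix ι ι ℂ}
    (hP : P.IsHermitian) (hproj : P * P = P) (j : ι) :
    ∑ k, ‖P j k‖ ^ 2 = (P j j).re := by
  have hrow : ∑ k, ((‖P j k‖ ^ 2 : ℝ) : ℂ) = P j j := by
    conv_rhs => rw [← hproj, mul_apply]
    refine sum_congr rfl fun k _ => ?_
    rw [← hP.apply k j, RCLike.star_def, RCLike.mul_conj]
    push_cast
    rfl
  exact_mod_cast congrArg Complex.re hrow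

lemma IsHermitian.norm_sq_apply_self {P : Matrix ι ι ℂ} (hP : P.IsHermitian) (j : ι) :
    ‖P j j‖ ^ 2 = (P j j).re ^ 2 := by
  have him : (P j j).im = 0 := Complex.conj_eq_iff_im.mp (hP.apply j j)
  rw [Complex.sq_norm, Complex.normSq_apply, him]
  ring

lemma IsHermitian.sum_offDiag_norm_sq_of_idempotent [Fintype ι] [DecidableEq ι] {P : Matrix ι ι ℂ}
    (hP : P.IsHermitian) (hproj : P * P = P) :
    ∑ p ∈ univ.offDiag, ‖P p.1 p.2‖ ^ 2 = ∑ j, ((P j j).re - (P j j).re ^ 2) := by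
  simp only [sum_offDiag_eq_sum_sub_sum_diag (fun p => ‖P p.1 p.2‖ ^ 2),
    hP.sum_norm_sq_row_eq_re_diag_of_idempotent hproj, hP.norm_sq_apply_self, sum_sub_distrib]

end Matrix

section Transient

open Complex

variable {ι : Type*}

lemma norm_exp_neg_I_mul_sub_one_le_two (x : ℝ) : ‖exp (-I * x) - 1‖ ≤ 2 := by
  calc ‖exp (-I * x) - 1‖ ≤ ‖exp (I * (-x : ℝ))‖ + ‖(1 : ℂ)‖ := by
        rw [ofReal_neg, mul_neg, ← neg_mul]
        exact norm_sub_le _ _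
    _ = 2 := by rw [norm_exp_I_mul_ofReal, norm_one]; norm_num

/-- `R_t` written in the eigenbasis of `L`. -/
noncomputable def transientMatrix (lam : ι → ℝ) (c : ι → ℂ) (t : ℝ) : Matrix ι ι ℂ :=
  Matrix.of fun j k =>
    if lam j = lam k then 0
    else I / t * (c j * (starRingEnd ℂ) (c k)) *
      (exp (-I * ((lam j : ℂ) - lam k) * t) - 1) / ((lam j : ℂ) - lam k)

lemma transientMatrix_apply_self (lam : ι → ℝ) (c : ι → ℂ) (t : ℝ) (j : ι) :
    transientMatrix lam c t j j = 0 := by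
  simp [transientMatrix]

lemma norm_transientMatrix_apply_le {lam : ι → ℝ} {γ t : ℝ} (hγ : 0 < γ) (ht : 0 < t)
    (hgap : ∀ j k, lam j ≠ lam k → γ ≤ |lam j - lam k|) (c : ι → ℂ) (j k : ι) :
    ‖transientMatrix lam c t j k‖ ≤ 2 / (γ * t) * (‖c j‖ * ‖c k‖) := by
  by_cases h : lam j = lam k
  · simp only [transientMatrix, Matrix.of_apply, if_pos h, norm_zero]
    positivity
  have hdist : γ ≤ ‖(lam j : ℂ) - lam k‖ := by
    rw [← ofReal_sub, norm_real, Real.norm_eq_abs]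
    exact hgap j k h
  have hexp : ‖exp (-I * ((lam j : ℂ) - lam k) * t) - 1‖ ≤ 2 := by
    simpa only [ofReal_mul, ofReal_sub, mul_assoc] using
      norm_exp_neg_I_mul_sub_one_le_two ((lam j - lam k) * t)
  simp only [transientMatrix, Matrix.of_apply, if_neg h, norm_div, norm_mul, norm_I, norm_real,
    Real.norm_of_nonneg ht.le, RCLike.norm_conj]
  calc 1 / t * (‖c j‖ * ‖c k‖) * ‖exp (-I * ((lam j : ℂ) - lam k) * t) - 1‖ /
        ‖(lam j : ℂ) - lam k‖
      ≤ 1 / t * (‖c j‖ * ‖c k‖) * 2 / γ := by gcongr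
    _ = 2 / (γ * t) * (‖c j‖ * ‖c k‖) := by field_simp

end Transient

open Complex in
/-- Bound on the transient term of the time-averaged pure state: with
`R_t = (i/t)Σ_{λⱼ≠λₖ} cⱼc̄ₖ (e^{-i(λⱼ−λₖ)t}−1)/(λⱼ−λₖ)|λⱼ⟩⟨λₖ|` and a Hermitian
projector `P` (expressed in the eigenbasis), the minimal nonzero gap `γ` gives
`|Tr(R_t P)| ≤ (2/(γt))·√(Σⱼ(Pⱼⱼ − Pⱼⱼ²))`. -/
theorem transient_trace_bound
    {ι : Type*} [Fintype ι] [DecidableEq ι]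
    (lam : ι → ℝ) (γ t : ℝ) (hγ : 0 < γ) (ht : 0 < t)
    (hgap : ∀ j k, lam j ≠ lam k → γ ≤ |lam j - lam k|)
    (c : ι → ℂ) (hc : ∑ j, ‖c j‖ ^ 2 = 1)
    (P : Matrix ι ι ℂ) (hP : P.IsHermitian) (hproj : P * P = P) :
    ‖Matrix.trace
        ((Matrix.of fun j k =>
          if lam j = lam k then 0
          else Complex.I / t * (c j * (starRingEnd ℂ) (c k)) *
            (Complex.exp (-Complex.I * ((lam j : ℂ) - lam k) * t) - 1) / ((lam j : ℂ) - lam k))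
          * P)‖
      ≤ 2 / (γ * t) * Real.sqrt (∑ j, ((P j j).re - ((P j j).re) ^ 2)) := by
  have hbound := Matrix.norm_trace_mul_le_of_norm_apply_le P (transientMatrix lam c t)
    (C := 2 / (γ * t)) (by positivity) (fun j => ‖c j‖) (transientMatrix_apply_self lam c t)
    (norm_transientMatrix_apply_le hγ ht hgap c)
  rw [hc, mul_one, hP.sum_offDiag_norm_sq_of_idempotent hproj, Matrix.trace_mul_comm] at hbound
  exact hbound
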